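/- Let w, w′ ∈ W^J with w′ < w in Bruhat order. Then there is at most one element of the coset w′W_J that is covered by w in Bruhat order; that is, there is at most one v ∈ W_J with w′v ⋖ w. -/

import Mathlib

namespace TNNFlag

open Classical

variable {B : Type*} {W : Type*} [Group W] {M : CoxeterMatrix B}

/-- Bruhat order on a Coxeter group, via the subword property: `u ≤ w` iff some reduced word
for `w` contains a sublist that is a reduced word for `u`. -/
def bruhatLE (cs : CoxeterSystem M W) (u w : W) : Prop :=
  ∃ ω : List B, cs.IsReduced ω ∧ cs.wordProd ω = w ∧
    ∃ ω' : List B, ω'.Sublist ω ∧ cs.IsReduced ω' ∧ cs.wordProd ω' = u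

/-- Strict Bruhat order. -/
def bruhatLT (cs : CoxeterSystem M W) (u w : W) : Prop :=
  bruhatLE cs u w ∧ u ≠ w

/-- Bruhat covering: `u ⋖ w`, i.e. `u < w` and `ℓ(w) = ℓ(u) + 1`. -/
def bruhatCov (cs : CoxeterSystem M W) (u w : W) : Prop :=
  bruhatLT cs u w ∧ cs.length w = cs.length u + 1

/-- The standard parabolic subgroup `W_J` generated by the simple reflections `s_j`, `j ∈ J`. -/
def parabolic (cs : CoxeterSystem M W) (J : Set B) : Subgroup W :=
  Subgroup.closure {w | ∃ j ∈ J, w = cs.simple j}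

/-- `W^J`: the set of minimal-length representatives of the cosets `W/W_J`. -/
def minReps (cs : CoxeterSystem M W) (J : Set B) : Set W :=
  {w | ∀ v ∈ parabolic cs J, cs.length w ≤ cs.length (w * v)}

/-- `u₀` is the longest element of the (finite) parabolic subgroup `W_J`. -/
def IsLongest (cs : CoxeterSystem M W) (J : Set B) (u₀ : W) : Prop :=
  u₀ ∈ parabolic cs J ∧ ∀ v ∈ parabolic cs J, cs.length v ≤ cs.length u₀

/-- `W^J_max = {w·u₀ : w ∈ W^J}`: maximal-length coset representatives of `W/W_J`. -/
def maxReps (cs : CoxeterSystem M W) (J : Set B) (u₀ : W) : Set W :=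
  {x | ∃ w ∈ minReps cs J, x = w * u₀}

/-- The index set `𝓘^J` of triples `(x, u, w) ∈ W^J_max × W_J × W^J` with `x ≤ wu`. -/
def IndexSet (cs : CoxeterSystem M W) (J : Set B) (u₀ : W) : Set (W × W × W) :=
  {t | t.1 ∈ maxReps cs J u₀ ∧ t.2.1 ∈ parabolic cs J ∧ t.2.2 ∈ minReps cs J ∧
    bruhatLE cs t.1 (t.2.2 * t.2.1)}

/-- The order relation between cells: `Q_{a,b,c} ≤ Q_{x,u,w}` iff the triples are equal or
there exist `b₁, b₂ ∈ W_J` with `b = b₁b₂`, `ℓ(b) = ℓ(b₁) + ℓ(b₂)` and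
`xu⁻¹ ≤ ab₂⁻¹ ≤ cb₁ ≤ w` in Bruhat order. Here `t = (a,b,c)` and `t' = (x,u,w)`. -/
def cellLE (cs : CoxeterSystem M W) (J : Set B) (t t' : W × W × W) : Prop :=
  t = t' ∨
    ∃ b₁ b₂ : W, b₁ ∈ parabolic cs J ∧ b₂ ∈ parabolic cs J ∧ t.2.1 = b₁ * b₂ ∧
      cs.length t.2.1 = cs.length b₁ + cs.length b₂ ∧
      bruhatLE cs (t'.1 * t'.2.1⁻¹) (t.1 * b₂⁻¹) ∧
      bruhatLE cs (t.1 * b₂⁻¹) (t.2.2 * b₁) ∧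
      bruhatLE cs (t.2.2 * b₁) t'.2.2

/-- The order of `𝓠^J`, on `Option (W × W × W)`, where `none` is the least element `0̂` and
`some (x,u,w)` is the cell `Q_{x,u,w}`. -/
def QLE (cs : CoxeterSystem M W) (J : Set B) :
    Option (W × W × W) → Option (W × W × W) → Prop
  | none, _ => True
  | some _, none => False
  | some t, some t' => cellLE cs J t t'

/-- Membership in `𝓠^J`: `0̂` together with the cells indexed by `𝓘^J`. -/
def Qmem (cs : CoxeterSystem M W) (J : Set B) (u₀ : W) : Option (W × W × W) → Prop
  | none => True
  | some t => t ∈ IndexSet cs J u₀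

/-- Strict order of `𝓠^J`. -/
def QLT (cs : CoxeterSystem M W) (J : Set B) (p q : Option (W × W × W)) : Prop :=
  QLE cs J p q ∧ p ≠ q

/-- Covering relation of `𝓠^J`. -/
def QCov (cs : CoxeterSystem M W) (J : Set B) (u₀ : W) (p q : Option (W × W × W)) : Prop :=
  Qmem cs J u₀ p ∧ Qmem cs J u₀ q ∧ QLT cs J p q ∧
    ∀ z, Qmem cs J u₀ z → QLT cs J p z → QLT cs J z q → False

/-- The rank function of `𝓠^J`: `ρ(0̂) = 0` and `ρ(Q_{x,u,w}) = ℓ(wu) - ℓ(x) + 1`. -/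
noncomputable def Qrank (cs : CoxeterSystem M W) : Option (W × W × W) → ℕ
  | none => 0
  | some t => cs.length (t.2.2 * t.2.1) - cs.length t.1 + 1

end TNNFlag
namespace TNNFlag

variable {B : Type*} {W : Type*} [Group W] {M : CoxeterMatrix B}

section Auxiliary

open List CoxeterSystem

attribute [local instance] Classical.propDecidable

variable (cs : CoxeterSystem M W)

private lemma simple_conj_cancel (i : B) (x : W) :
    cs.simple i * (cs.simple i * x * cs.simple i) * cs.simple i = x := by
  have h : cs.simple i * x * cs.simple i = cs.simple i * (x * cs.simple i) := by
    rw [mul_assoc]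
  rw [h, cs.simple_mul_simple_cancel_left, cs.simple_mul_simple_cancel_right]

private lemma conj_simple_iff (i : B) (x : W) :
    cs.simple i * x * cs.simple i = cs.simple i ↔ x = cs.simple i := by
  constructor
  · intro h
    have h2 := simple_conj_cancel cs i x
    rw [h] at h2
    rw [← h2, cs.simple_mul_simple_self, one_mul]
  · intro h
    rw [h, cs.simple_mul_simple_self, one_mul]

/-- The permutation of `W × ℤˣ` associated to a simple reflection. -/
private noncomputable def toggle (i : B) : Equiv.Perm (W × ℤˣ) where
  toFun p := (cs.simple i * p.1 * cs.simple i, if p.1 = cs.simple i then -p.2 else p.2)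
  invFun p := (cs.simple i * p.1 * cs.simple i, if p.1 = cs.simple i then -p.2 else p.2)
  left_inv p := by
    obtain ⟨t, ε⟩ := p
    simp only [Prod.mk.injEq]
    constructor
    · exact simple_conj_cancel cs i t
    · by_cases h : t = cs.simple i
      · rw [if_pos h, if_pos ((conj_simple_iff cs i t).mpr h), neg_neg]
      · rw [if_neg h, if_neg (fun hc => h ((conj_simple_iff cs i t).mp hc))]
  right_inv p := by
    obtain ⟨t, ε⟩ := p
    simp only [Prod.mk.injEq]
    constructor
    · exact simple_conj_cancel cs i t
    · by_cases h : t = cs.simple i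
      · rw [if_pos h, if_pos ((conj_simple_iff cs i t).mpr h), neg_neg]
      · rw [if_neg h, if_neg (fun hc => h ((conj_simple_iff cs i t).mp hc))]

private lemma toggle_apply (i : B) (t : W) (ε : ℤˣ) :
    toggle cs i (t, ε) = (cs.simple i * t * cs.simple i,
      if t = cs.simple i then -ε else ε) := rfl

private lemma ris_cons (i : B) (ω : List B) :
    cs.rightInvSeq (i :: ω) =
      ((cs.wordProd ω)⁻¹ * cs.simple i * cs.wordProd ω) :: cs.rightInvSeq ω := rfl

private lemma prod_toggle_apply (ω : List B) (t : W) (ε : ℤˣ) :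
    ((ω.map (toggle cs)).prod) (t, ε) =
      (cs.wordProd ω * t * (cs.wordProd ω)⁻¹,
        ε * (-1) ^ ((cs.rightInvSeq ω).count t)) := by
  induction' ω with i ω ih
  · simp
  · rw [List.map_cons, List.prod_cons, Equiv.Perm.mul_apply, ih, toggle_apply,
      ris_cons, List.count_cons]
    have hiff : ((cs.wordProd ω)⁻¹ * cs.simple i * cs.wordProd ω = t)
        ↔ (cs.wordProd ω * t * (cs.wordProd ω)⁻¹ = cs.simple i) := by
      constructor <;> (intro h; rw [← h]; group)
    have hfst : cs.simple i * (cs.wordProd ω * t * (cs.wordProd ω)⁻¹) * cs.simple i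
        = cs.wordProd (i :: ω) * t * (cs.wordProd (i :: ω))⁻¹ := by
      rw [cs.wordProd_cons, mul_inv_rev, cs.inv_simple]
      group
    by_cases h : cs.wordProd ω * t * (cs.wordProd ω)⁻¹ = cs.simple i
    · rw [if_pos h, if_pos (beq_iff_eq.mpr (hiff.mpr h))]
      rw [Prod.mk.injEq]
      refine ⟨hfst, ?_⟩
      rw [pow_succ, ← mul_assoc, mul_neg_one]
    · rw [if_neg h, if_neg (fun hc => h (hiff.mp (beq_iff_eq.mp hc)))]
      rw [Prod.mk.injEq]
      exact ⟨hfst, by rw [add_zero]⟩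

private lemma prod_map_alternatingWord {G : Type*} [Monoid G] (f : B → G) (i j : B) (m : ℕ) :
    ((alternatingWord i j m).map f).prod
      = (if Even m then 1 else f j) * (f i * f j) ^ (m / 2) := by
  induction' m with m ih
  · simp [alternatingWord]
  · rw [alternatingWord_succ', List.map_cons, List.prod_cons, ih]
    by_cases hm : Even m
    · have h1 : ¬ Even (m + 1) := by simp [hm, parity_simps]
      have h2 : (m + 1) / 2 = m / 2 := Nat.succ_div_of_not_dvd <| by
        rwa [← even_iff_two_dvd]
      simp [hm, h1, h2]
    · have h1 : Even (m + 1) := by simp [hm, parity_simps]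
      have h2 : (m + 1) / 2 = m / 2 + 1 := Nat.succ_div_of_dvd h1.two_dvd
      simp [hm, h1, h2, ← pow_succ', ← mul_assoc]

private lemma alternatingWord_drop (i j : B) :
    ∀ (k m : ℕ), (alternatingWord i j m).drop k = alternatingWord i j (m - k) := by
  intro k
  induction' k with k ih
  · simp
  · intro m
    cases' m with m
    · simp [alternatingWord]
    · rw [alternatingWord_succ', List.drop_succ_cons, ih m, Nat.succ_sub_succ]

private lemma sj_pow (i j : B) :
    ∀ (a : ℕ), ((cs.simple i * cs.simple j) ^ a)⁻¹ * cs.simple j * (cs.simple i * cs.simple j) ^ a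
      = cs.simple j * (cs.simple i * cs.simple j) ^ (2 * a) := by
  intro a
  induction' a with a ih
  · simp
  · have h1 : ((cs.simple i * cs.simple j) ^ (a + 1))⁻¹ * cs.simple j
        * (cs.simple i * cs.simple j) ^ (a + 1)
        = (cs.simple i * cs.simple j)⁻¹
          * (((cs.simple i * cs.simple j) ^ a)⁻¹ * cs.simple j * (cs.simple i * cs.simple j) ^ a)
          * (cs.simple i * cs.simple j) := by
      rw [pow_succ, mul_inv_rev]
      simp only [mul_assoc]
    rw [h1, ih]
    have h2 : (cs.simple i * cs.simple j)⁻¹ * cs.simple j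
        = cs.simple j * (cs.simple i * cs.simple j) := by
      rw [mul_inv_rev, cs.inv_simple, cs.inv_simple, mul_assoc]
    have h4 : (cs.simple i * cs.simple j)⁻¹
          * (cs.simple j * (cs.simple i * cs.simple j) ^ (2 * a))
          * (cs.simple i * cs.simple j)
        = ((cs.simple i * cs.simple j)⁻¹ * cs.simple j)
          * ((cs.simple i * cs.simple j) ^ (2 * a) * (cs.simple i * cs.simple j)) := by
      simp only [mul_assoc]
    rw [h4, h2, ← pow_succ, mul_assoc, ← pow_succ',
      show 2 * (a + 1) = 2 * a + 1 + 1 by ring]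

private lemma ris_alt_entry (i j : B) (L : ℕ) :
    (cs.wordProd (alternatingWord i j L))⁻¹ * cs.wordProd (alternatingWord i j (L + 1))
      = cs.simple j * (cs.simple i * cs.simple j) ^ L := by
  rw [cs.prod_alternatingWord_eq_mul_pow, cs.prod_alternatingWord_eq_mul_pow]
  rcases Nat.even_or_odd L with hL | hL
  · obtain ⟨c, hc⟩ := hL
    have h1 : ¬ Even (L + 1) := by
      rw [Nat.even_add_one]
      simpa using ⟨c, hc⟩
    have h2 : (L + 1) / 2 = c := by omega
    have h3 : L / 2 = c := by omega
    rw [if_pos ⟨c, hc⟩, if_neg h1, h2, h3, one_mul, ← mul_assoc, sj_pow cs i j c,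
      show 2 * c = L by omega]
  · obtain ⟨c, hc⟩ := hL
    have h1 : ¬ Even L := by simp [hc, parity_simps]
    have h2 : Even (L + 1) := by rw [Nat.even_add_one]; exact h1
    have h3 : (L + 1) / 2 = c + 1 := by omega
    have h4 : L / 2 = c := by omega
    rw [if_neg h1, if_pos h2, h3, h4, one_mul, mul_inv_rev, cs.inv_simple, pow_succ]
    calc ((cs.simple i * cs.simple j) ^ c)⁻¹ * cs.simple j
          * ((cs.simple i * cs.simple j) ^ c * (cs.simple i * cs.simple j))
        = (((cs.simple i * cs.simple j) ^ c)⁻¹ * cs.simple j * (cs.simple i * cs.simple j) ^ c)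
          * (cs.simple i * cs.simple j) := by group
      _ = cs.simple j * (cs.simple i * cs.simple j) ^ (2 * c) * (cs.simple i * cs.simple j) := by
          rw [sj_pow cs i j c]
      _ = cs.simple j * (cs.simple i * cs.simple j) ^ L := by
          rw [mul_assoc, ← pow_succ, show 2 * c + 1 = L by omega]

private lemma ris_alternatingWord (i j : B) (N : ℕ) :
    cs.rightInvSeq (alternatingWord i j N)
      = (List.range N).map
          (fun k => cs.simple j * (cs.simple i * cs.simple j) ^ (N - 1 - k)) := by
  apply List.ext_getElem
  · simp
  · intro k h1 h2
    rw [cs.length_rightInvSeq, length_alternatingWord] at h1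
    rw [← List.getD_eq_getElem _ 1, cs.getD_rightInvSeq]
    have hdrop : (alternatingWord i j N).drop (k + 1) = alternatingWord i j (N - 1 - k) := by
      rw [alternatingWord_drop]
      congr 1
      omega
    have hget : (alternatingWord i j N)[k]?
        = some (if Even (N - 1 - k) then j else i) := by
      have h3 : ((alternatingWord i j N).drop k)[0]?
          = (alternatingWord i j N)[k]? := by
        rw [List.getElem?_drop, Nat.add_zero]
      rw [← h3, alternatingWord_drop, show N - k = (N - 1 - k) + 1 by omega,
        alternatingWord_succ']
      rfl
    rw [hdrop, hget]
    have hcons : cs.simple (if Even (N - 1 - k) then j else i)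
          * cs.wordProd (alternatingWord i j (N - 1 - k))
        = cs.wordProd (alternatingWord i j ((N - 1 - k) + 1)) := by
      rw [alternatingWord_succ', cs.wordProd_cons]
    simp only [Option.map_some, Option.getD_some]
    rw [mul_assoc, hcons, ris_alt_entry cs i j]
    simp

private lemma even_count_ris_alt (i j : B) (t : W) :
    Even ((cs.rightInvSeq (alternatingWord i j (2 * M i j))).count t) := by
  rw [ris_alternatingWord cs i j]
  have hsplit : List.range (2 * M i j)
      = List.range (M i j) ++ (List.range (M i j)).map (fun k => M i j + k) := by
    rw [two_mul, List.range_add]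
  rw [hsplit, List.map_append, List.map_map]
  have hmap : (List.range (M i j)).map
        ((fun k => cs.simple j * (cs.simple i * cs.simple j) ^ (2 * M i j - 1 - k))
          ∘ (fun k => M i j + k))
      = (List.range (M i j)).map
        (fun k => cs.simple j * (cs.simple i * cs.simple j) ^ (2 * M i j - 1 - k)) := by
    apply List.map_congr_left
    intro k hk
    have hk' : k < M i j := List.mem_range.mp hk
    simp only [Function.comp_apply]
    rw [show 2 * M i j - 1 - (M i j + k) = M i j - 1 - k by omega,
      show 2 * M i j - 1 - k = (M i j - 1 - k) + M i j by omega,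
      pow_add, cs.simple_mul_simple_pow i j, mul_one]
  rw [hmap, List.count_append]
  exact ⟨_, rfl⟩

private lemma toggle_liftable : M.IsLiftable (toggle cs) := by
  intro i j
  have hpow : (toggle cs i * toggle cs j) ^ M i j
      = ((alternatingWord i j (2 * M i j)).map (toggle cs)).prod := by
    rw [prod_map_alternatingWord, if_pos (even_two_mul _), one_mul,
      Nat.mul_div_cancel_left _ (by norm_num : (0:ℕ) < 2)]
  rw [hpow]
  apply Equiv.ext
  rintro ⟨t, ε⟩
  rw [prod_toggle_apply]
  have hπ : cs.wordProd (alternatingWord i j (2 * M i j)) = 1 := by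
    rw [cs.prod_alternatingWord_eq_mul_pow, if_pos (even_two_mul _), one_mul,
      Nat.mul_div_cancel_left _ (by norm_num : (0:ℕ) < 2)]
    exact cs.simple_mul_simple_pow i j
  rw [hπ, Even.neg_one_pow (even_count_ris_alt cs i j t), mul_one]
  simp

/-- The sign homomorphism `W →* Perm (W × ℤˣ)`. -/
private noncomputable def phi : W →* Equiv.Perm (W × ℤˣ) :=
  cs.lift ⟨toggle cs, toggle_liftable cs⟩

private lemma phi_simple (i : B) : phi cs (cs.simple i) = toggle cs i :=
  cs.lift_apply_simple (toggle_liftable cs) i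

private lemma phi_wordProd (ω : List B) :
    phi cs (cs.wordProd ω) = (ω.map (toggle cs)).prod := by
  rw [CoxeterSystem.wordProd, map_list_prod, List.map_map]
  congr 1
  apply List.map_congr_left
  intro a _
  exact phi_simple cs a

/-- The sign of `t` relative to `w`. -/
private noncomputable def eta (w t : W) : ℤˣ := (phi cs w (t, 1)).2

private lemma eta_spec (ω : List B) (t : W) :
    eta cs (cs.wordProd ω) t = (-1) ^ ((cs.rightInvSeq ω).count t) := by
  unfold eta
  rw [phi_wordProd, prod_toggle_apply, one_mul]

private lemma phi_apply (w t : W) (ε : ℤˣ) :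
    phi cs w (t, ε) = (w * t * w⁻¹, ε * eta cs w t) := by
  obtain ⟨ω, -, rfl⟩ := cs.exists_reduced_word' w
  rw [phi_wordProd, prod_toggle_apply, eta_spec]

private lemma eta_mul (a b t : W) :
    eta cs (a * b) t = eta cs b t * eta cs a (b * t * b⁻¹) := by
  have h1 : phi cs (a * b) (t, 1) = phi cs a (phi cs b (t, 1)) := by
    rw [map_mul]; rfl
  show (phi cs (a * b) (t, 1)).2 = _
  rw [h1, phi_apply cs b t 1, phi_apply cs a (b * t * b⁻¹) (1 * eta cs b t)]
  simp

private lemma eta_one (t : W) : eta cs 1 t = 1 := by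
  unfold eta
  rw [map_one]
  rfl

private lemma eta_simple (i : B) (t : W) :
    eta cs (cs.simple i) t = if t = cs.simple i then -1 else 1 := by
  unfold eta
  rw [phi_simple, toggle_apply]

private lemma eta_mul_simple (u : W) (k : B) (t : W) :
    eta cs (u * cs.simple k) t
      = (if t = cs.simple k then -1 else 1) * eta cs u (cs.simple k * t * cs.simple k) := by
  rw [eta_mul, eta_simple, cs.inv_simple]

private lemma eta_inv_conj (w t : W) : eta cs w⁻¹ (w * t * w⁻¹) = eta cs w t := by
  obtain ⟨ω, -, rfl⟩ := cs.exists_reduced_word' w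
  induction' ω with i ω ih generalizing t
  · simp
  · rw [cs.wordProd_cons]
    have hinv : (cs.simple i * cs.wordProd ω)⁻¹ = (cs.wordProd ω)⁻¹ * cs.simple i := by
      rw [mul_inv_rev, cs.inv_simple]
    rw [hinv, eta_mul_simple]
    have hA : cs.simple i * cs.wordProd ω * t * ((cs.wordProd ω)⁻¹ * cs.simple i)
        = cs.simple i * (cs.wordProd ω * t * (cs.wordProd ω)⁻¹) * cs.simple i := by
      group
    rw [hA, simple_conj_cancel cs i (cs.wordProd ω * t * (cs.wordProd ω)⁻¹), ih t,
      eta_mul cs (cs.simple i) (cs.wordProd ω) t, eta_simple, conj_simple_iff cs i]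
    exact mul_comm _ _

private lemma eta_refl_self {t : W} (ht : cs.IsReflection t) : eta cs t t = -1 := by
  obtain ⟨v, i, rfl⟩ := ht
  have h1 := eta_mul cs (v * cs.simple i) v⁻¹ (v * cs.simple i * v⁻¹)
  have e2 : v⁻¹ * (v * cs.simple i * v⁻¹) * v⁻¹⁻¹ = cs.simple i := by group
  rw [e2] at h1
  rw [h1, eta_inv_conj cs v (cs.simple i)]
  have h3 : eta cs (v * cs.simple i) (cs.simple i) = -1 * eta cs v (cs.simple i) := by
    rw [eta_mul_simple, if_pos rfl, cs.simple_mul_simple_self, one_mul]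
  rw [h3, ← mul_assoc, mul_comm (eta cs v (cs.simple i)) (-1 : ℤˣ), mul_assoc,
    Int.units_mul_self, mul_one]

private lemma eta_eq_one_of_lt :
    ∀ (n : ℕ) (w t : W), cs.length w ≤ n → cs.IsReflection t →
      cs.length w < cs.length (w * t) → eta cs w t = 1 := by
  intro n
  induction' n with n ih
  · intro w t hn _ _
    have hw : w = 1 := cs.length_eq_zero_iff.mp (Nat.le_zero.mp hn)
    subst hw
    exact eta_one cs t
  · intro w t hn ht hlen
    by_cases hw1 : w = 1
    · subst hw1; exact eta_one cs t
    · obtain ⟨k, hk⟩ := cs.exists_rightDescent_of_ne_one hw1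
      have hk' : cs.length (w * cs.simple k) < cs.length w := hk
      have hdes : cs.length (w * cs.simple k) + 1 = cs.length w := by
        rcases cs.length_mul_simple w k with h | h <;> omega
      have htk : t ≠ cs.simple k := by
        rintro rfl
        omega
      have hw : w = (w * cs.simple k) * cs.simple k := by
        rw [cs.simple_mul_simple_cancel_right]
      rw [hw, eta_mul_simple, if_neg htk, one_mul]
      have ht' : cs.IsReflection (cs.simple k * t * cs.simple k) := by
        have := ht.conj (cs.simple k)
        rwa [cs.inv_simple] at this
      apply ih (w * cs.simple k) _ (by omega) ht'
      have he : (w * cs.simple k) * (cs.simple k * t * cs.simple k)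
          = w * t * cs.simple k := by
        have h9 : cs.simple k * (cs.simple k * t * cs.simple k) = t * cs.simple k := by
          rw [show cs.simple k * t * cs.simple k = cs.simple k * (t * cs.simple k) from
            by rw [mul_assoc], cs.simple_mul_simple_cancel_left]
        rw [mul_assoc, h9, ← mul_assoc]
      rw [he]
      rcases cs.length_mul_simple (w * t) k with h | h <;> omega

private lemma eta_eq_neg_one {w t : W} (ht : cs.IsReflection t)
    (h : cs.length (w * t) < cs.length w) : eta cs w t = -1 := by
  have hW : w = (w * t) * t := by rw [mul_assoc, ht.mul_self, mul_one]
  have h2 : eta cs (w * t) t = 1 := by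
    apply eta_eq_one_of_lt cs (cs.length (w * t)) _ _ le_rfl ht
    rw [← hW]
    exact h
  have h3 : t * t * t⁻¹ = t := by rw [ht.mul_self, one_mul, ht.inv]
  calc eta cs w t = eta cs ((w * t) * t) t := by rw [← hW]
    _ = eta cs t t * eta cs (w * t) (t * t * t⁻¹) := eta_mul cs (w * t) t t
    _ = (-1) * 1 := by rw [h3, eta_refl_self cs ht, h2]
    _ = -1 := by rw [mul_one]

/-- Strong exchange property. -/
private lemma strong_exchange (ω : List B) {t : W} (ht : cs.IsReflection t)
    (h : cs.length (cs.wordProd ω * t) < cs.length (cs.wordProd ω)) :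
    ∃ k, ∃ _ : k < ω.length, cs.wordProd (ω.eraseIdx k) = cs.wordProd ω * t := by
  have h1 : eta cs (cs.wordProd ω) t = -1 := eta_eq_neg_one cs ht h
  rw [eta_spec] at h1
  have hmem : t ∈ cs.rightInvSeq ω := by
    by_contra hc
    rw [List.count_eq_zero.mpr hc, pow_zero] at h1
    have := congrArg (fun u : ℤˣ => (u : ℤ)) h1
    norm_num at this
  obtain ⟨k, hk, hget⟩ := List.getElem_of_mem hmem
  have hk' : k < ω.length := by rwa [cs.length_rightInvSeq] at hk
  refine ⟨k, hk', ?_⟩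
  rw [← cs.wordProd_mul_getD_rightInvSeq, List.getD_eq_getElem _ _ hk, hget]

private lemma sublist_eraseIdx {l' l : List B} (h : l'.Sublist l)
    (hl : l'.length + 1 = l.length) : ∃ k, ∃ _ : k < l.length, l' = l.eraseIdx k := by
  induction h with
  | slnil => simp at hl
  | @cons l₁ l₂ a h ih =>
    have hlen : l₁.length = l₂.length := by
      simp only [List.length_cons] at hl
      omega
    refine ⟨0, by simp, ?_⟩
    rw [List.eraseIdx_cons_zero]
    exact h.eq_of_length hlen
  | @cons_cons l₁ l₂ a h ih =>
    simp only [List.length_cons] at hl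
    obtain ⟨k, hk, hkeq⟩ := ih (by omega)
    refine ⟨k + 1, by simp; omega, ?_⟩
    rw [List.eraseIdx_cons_succ, ← hkeq]

private lemma cov_exists_reflection {x w : W} (h : bruhatCov cs x w) :
    ∃ t, cs.IsReflection t ∧ x = w * t := by
  obtain ⟨⟨⟨ω, hred, hπ, ω', hsub, hred', hπ'⟩, -⟩, hlen⟩ := h
  have hlω : ω.length = cs.length w := by rw [← hπ]; exact hred.symm
  have hlω' : ω'.length = cs.length x := by rw [← hπ']; exact hred'.symm
  obtain ⟨k, hk, hkeq⟩ := sublist_eraseIdx hsub (by omega)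
  have hk2 : k < (cs.rightInvSeq ω).length := by rwa [cs.length_rightInvSeq]
  refine ⟨(cs.rightInvSeq ω).getD k 1, ?_, ?_⟩
  · apply cs.isReflection_of_mem_rightInvSeq ω
    rw [List.getD_eq_getElem _ _ hk2]
    exact List.getElem_mem _
  · rw [← hπ', hkeq, ← hπ, cs.wordProd_mul_getD_rightInvSeq]

private lemma cov_of_reflection {x w t : W} (ht : cs.IsReflection t) (hx : x = w * t)
    (hlen : cs.length w = cs.length x + 1) : bruhatCov cs x w := by
  obtain ⟨ω, hred, hw⟩ := cs.exists_reduced_word' w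
  have hl : cs.length (cs.wordProd ω * t) < cs.length (cs.wordProd ω) := by
    rw [← hw, ← hx]
    omega
  obtain ⟨k, hk, hk2⟩ := strong_exchange cs ω ht hl
  have hxne : x ≠ w := by
    intro hc
    rw [hc] at hlen
    omega
  refine ⟨⟨⟨ω, hred, hw.symm, ω.eraseIdx k, List.eraseIdx_sublist ω k, ?_, ?_⟩, hxne⟩, hlen⟩
  · show cs.length (cs.wordProd (ω.eraseIdx k)) = (ω.eraseIdx k).length
    have h1 : (ω.eraseIdx k).length + 1 = ω.length := List.length_eraseIdx_add_one hk
    have h2 : ω.length = cs.length w := by rw [hw]; exact hred.symm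
    rw [hk2, ← hw, ← hx]
    omega
  · rw [hk2, ← hw, ← hx]

private lemma descent_diamond {x w : W} (k : B)
    (hdesc : cs.length (cs.simple k * w) < cs.length w)
    (hcov : bruhatCov cs x w) (hne : x ≠ cs.simple k * w) :
    bruhatCov cs (cs.simple k * x) (cs.simple k * w)
      ∧ cs.length (cs.simple k * x) + 1 = cs.length x := by
  obtain ⟨t, ht, rfl⟩ := cov_exists_reflection cs hcov
  have hlen : cs.length w = cs.length (w * t) + 1 := hcov.2
  have hsw : cs.length (cs.simple k * w) + 1 = cs.length w := by
    rcases cs.length_simple_mul w k with h | h <;> omega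
  have hstep : cs.length (cs.simple k * (w * t)) + 1 = cs.length (w * t) := by
    rcases cs.length_simple_mul (w * t) k with hbad | h
    · exfalso
      obtain ⟨α, hαred, hα⟩ := cs.exists_reduced_word' (cs.simple k * w)
      have hαlen : α.length = cs.length (cs.simple k * w) := by
        rw [hα]; exact hαred.symm
      have hπkα : cs.wordProd (k :: α) = w := by
        rw [cs.wordProd_cons, ← hα, cs.simple_mul_simple_cancel_left]
      have hexch : cs.length (cs.wordProd (k :: α) * t)
          < cs.length (cs.wordProd (k :: α)) := by
        rw [hπkα]; omega
      obtain ⟨m, hm, hm2⟩ := strong_exchange cs (k :: α) ht hexch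
      rw [hπkα] at hm2
      rcases m with - | j
      · rw [List.eraseIdx_cons_zero, ← hα] at hm2
        exact hne hm2.symm
      · rw [List.eraseIdx_cons_succ, cs.wordProd_cons] at hm2
        have hskwt : cs.simple k * (w * t) = cs.wordProd (α.eraseIdx j) := by
          rw [← hm2, cs.simple_mul_simple_cancel_left]
        have hj : j < α.length := by
          simp only [List.length_cons] at hm
          omega
        have hlen2 : (α.eraseIdx j).length + 1 = α.length := List.length_eraseIdx_add_one hj
        have h5 := cs.length_wordProd_le (α.eraseIdx j)
        rw [← hskwt] at h5
        omega
    · exact h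
  refine ⟨cov_of_reflection cs ht (by rw [mul_assoc]) (by omega), hstep⟩

private lemma wordProd_mem_parabolic {J : Set B} {ω : List B} (hω : ∀ b ∈ ω, b ∈ J) :
    cs.wordProd ω ∈ parabolic cs J := by
  induction' ω with i ω ih
  · rw [cs.wordProd_nil]; exact one_mem _
  · rw [cs.wordProd_cons]
    exact mul_mem (Subgroup.subset_closure ⟨i, hω i (by simp), rfl⟩)
      (ih fun b hb => hω b (by simp [hb]))

private lemma exists_word_of_mem_parabolic {J : Set B} {v : W} (hv : v ∈ parabolic cs J) :
    ∃ ω : List B, (∀ b ∈ ω, b ∈ J) ∧ cs.wordProd ω = v := by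
  induction hv using Subgroup.closure_induction with
  | mem x hx =>
    obtain ⟨j, hj, rfl⟩ := hx
    exact ⟨[j], by simpa using hj, cs.wordProd_singleton j⟩
  | one => exact ⟨[], by simp, cs.wordProd_nil⟩
  | mul x y _ _ hx hy =>
    obtain ⟨ω₁, h1, rfl⟩ := hx
    obtain ⟨ω₂, h2, rfl⟩ := hy
    refine ⟨ω₁ ++ ω₂, ?_, cs.wordProd_append ω₁ ω₂⟩
    intro b hb
    rcases List.mem_append.mp hb with h | h
    · exact h1 b h
    · exact h2 b h
  | inv x _ hx =>
    obtain ⟨ω, h1, rfl⟩ := hx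
    exact ⟨ω.reverse, fun b hb => h1 b (List.mem_reverse.mp hb), cs.wordProd_reverse ω⟩

private lemma exists_reduced_word_subset :
    ∀ (n : ℕ) (ω : List B), ω.length ≤ n →
      ∃ β : List B, (∀ b ∈ β, b ∈ ω) ∧ cs.IsReduced β ∧ cs.wordProd β = cs.wordProd ω := by
  intro n
  induction' n with n ih
  · intro ω hω
    have hnil : ω = [] := List.length_eq_zero_iff.mp (Nat.le_zero.mp hω)
    subst hnil
    exact ⟨[], by simp, by simp [CoxeterSystem.IsReduced], rfl⟩
  · intro ω hω
    cases' ω with a ω'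
    · exact ⟨[], by simp, by simp [CoxeterSystem.IsReduced], rfl⟩
    · obtain ⟨β', hβ'mem, hβ'red, hβ'π⟩ := ih ω' (by
        simp only [List.length_cons] at hω; omega)
      rcases cs.length_simple_mul (cs.wordProd ω') a with hgt | hlt
      · refine ⟨a :: β', ?_, ?_, ?_⟩
        · intro b hb
          rcases List.mem_cons.mp hb with h | h
          · simp [h]
          · simp [hβ'mem b h]
        · show cs.length (cs.wordProd (a :: β')) = (a :: β').length
          rw [cs.wordProd_cons, hβ'π, hgt, List.length_cons]
          have hlu : cs.length (cs.wordProd β') = β'.length := hβ'red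
          rw [hβ'π] at hlu
          omega
        · rw [cs.wordProd_cons, cs.wordProd_cons, hβ'π]
      · have hrev : cs.length (cs.wordProd β'.reverse * cs.simple a)
            < cs.length (cs.wordProd β'.reverse) := by
          rw [cs.wordProd_reverse, hβ'π]
          have hinv : ((cs.wordProd ω')⁻¹ * cs.simple a)⁻¹
              = cs.simple a * cs.wordProd ω' := by
            rw [mul_inv_rev, cs.inv_simple, inv_inv]
          have h1 : cs.length ((cs.wordProd ω')⁻¹ * cs.simple a)
              = cs.length (cs.simple a * cs.wordProd ω') := by
            rw [← cs.length_inv, hinv]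
          rw [h1, cs.length_inv]
          omega
        obtain ⟨k, hk, hk2⟩ := strong_exchange cs β'.reverse
          (cs.isReflection_simple a) hrev
        set γ := (β'.reverse.eraseIdx k).reverse with hγ
        have hγπ : cs.wordProd γ = cs.simple a * cs.wordProd ω' := by
          rw [hγ, cs.wordProd_reverse, hk2, cs.wordProd_reverse, hβ'π, mul_inv_rev,
            cs.inv_simple, inv_inv]
        have hγlen : γ.length + 1 = β'.length := by
          rw [hγ, List.length_reverse]
          have := List.length_eraseIdx_add_one hk
          rwa [List.length_reverse] at this
        have hβ'len : β'.length ≤ ω'.length := by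
          have h2 : cs.length (cs.wordProd β') = β'.length := hβ'red
          rw [hβ'π] at h2
          rw [← h2]
          exact cs.length_wordProd_le ω'
        obtain ⟨β, hβmem, hβred, hβπ⟩ := ih γ (by
          simp only [List.length_cons] at hω; omega)
        refine ⟨β, ?_, hβred, ?_⟩
        · intro b hb
          have hb2 : b ∈ γ := hβmem b hb
          have hb3 : b ∈ β' := by
            rw [hγ, List.mem_reverse] at hb2
            have := List.eraseIdx_subset hb2
            rwa [List.mem_reverse] at this
          exact List.mem_cons_of_mem a (hβ'mem b hb3)
        · rw [hβπ, hγπ, cs.wordProd_cons]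

private lemma exists_reduced_word_parabolic {J : Set B} {v : W} (hv : v ∈ parabolic cs J) :
    ∃ β : List B, (∀ b ∈ β, b ∈ J) ∧ cs.IsReduced β ∧ cs.wordProd β = v := by
  obtain ⟨ω, hω, rfl⟩ := exists_word_of_mem_parabolic cs hv
  obtain ⟨β, h1, h2, h3⟩ := exists_reduced_word_subset cs ω.length ω le_rfl
  exact ⟨β, fun b hb => hω b (h1 b hb), h2, h3⟩

private lemma minReps_mul_parabolic_length {J : Set B} {w : W} (hw : w ∈ minReps cs J) :
    ∀ (n : ℕ) (v : W), v ∈ parabolic cs J → cs.length v ≤ n →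
      cs.length (w * v) = cs.length w + cs.length v := by
  intro n
  induction' n with n ih
  · intro v _ hn
    have hv1 : v = 1 := cs.length_eq_zero_iff.mp (Nat.le_zero.mp hn)
    subst hv1
    simp
  · intro v hv hn
    by_cases hv1 : v = 1
    · subst hv1; simp
    · obtain ⟨β, hβJ, hβred, hβπ⟩ := exists_reduced_word_parabolic cs hv
      rcases List.eq_nil_or_concat β with hnil | ⟨β₁, b, hcat⟩
      · exfalso; apply hv1; rw [← hβπ, hnil, cs.wordProd_nil]
      subst hcat
      have hβ₁red : cs.IsReduced β₁ := by
        have := hβred.take β₁.length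
        rwa [List.concat_eq_append, List.take_left] at this
      have hv₁mem : cs.wordProd β₁ ∈ parabolic cs J :=
        wordProd_mem_parabolic cs (fun x hx => hβJ x (by
          rw [List.concat_eq_append, List.mem_append]; exact Or.inl hx))
      have hbJ : b ∈ J := hβJ b (by
        rw [List.concat_eq_append, List.mem_append]; right; simp)
      have hlv : cs.length v = β₁.length + 1 := by
        have h1 : cs.length (cs.wordProd (β₁.concat b)) = (β₁.concat b).length := hβred
        rw [hβπ, List.length_concat] at h1
        exact h1
      have hlv₁ : cs.length (cs.wordProd β₁) = β₁.length := hβ₁red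
      have hIH : cs.length (w * cs.wordProd β₁) = cs.length w + β₁.length := by
        have := ih (cs.wordProd β₁) hv₁mem (by omega)
        omega
      have hveq : v = cs.wordProd β₁ * cs.simple b := by
        rw [← hβπ, cs.wordProd_concat]
      rcases cs.length_mul_simple (w * cs.wordProd β₁) b with hcase | hcase
      · have hgoal : w * v = w * cs.wordProd β₁ * cs.simple b := by
          rw [hveq, mul_assoc]
        rw [hgoal, hlv]
        omega
      · exfalso
        obtain ⟨α, hαred, hαw⟩ := cs.exists_reduced_word' w
        have hαlen : α.length = cs.length w := by rw [hαw]; exact hαred.symm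
        have hδπ : cs.wordProd (α ++ β₁) = w * cs.wordProd β₁ := by
          rw [cs.wordProd_append, ← hαw]
        have hexch : cs.length (cs.wordProd (α ++ β₁) * cs.simple b)
            < cs.length (cs.wordProd (α ++ β₁)) := by
          rw [hδπ]; omega
        obtain ⟨m, hm, hm2⟩ := strong_exchange cs (α ++ β₁)
          (cs.isReflection_simple b) hexch
        rw [hδπ] at hm2
        rw [List.length_append] at hm
        by_cases hmα : m < α.length
        · rw [List.eraseIdx_append_of_lt_length hmα, cs.wordProd_append] at hm2
          have hq : w * (cs.wordProd β₁ * cs.simple b * (cs.wordProd β₁)⁻¹)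
              = cs.wordProd (α.eraseIdx m) := by
            have h4 : cs.wordProd (α.eraseIdx m)
                = w * cs.wordProd β₁ * cs.simple b * (cs.wordProd β₁)⁻¹ := by
              rw [← hm2]; group
            rw [h4]; group
          have hqmem : cs.wordProd β₁ * cs.simple b * (cs.wordProd β₁)⁻¹ ∈ parabolic cs J :=
            mul_mem (mul_mem hv₁mem (Subgroup.subset_closure ⟨b, hbJ, rfl⟩))
              (inv_mem hv₁mem)
          have hmin := hw _ hqmem
          rw [hq] at hmin
          have h5 := cs.length_wordProd_le (α.eraseIdx m)
          have h6 : (α.eraseIdx m).length + 1 = α.length :=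
            List.length_eraseIdx_add_one hmα
          omega
        · push_neg at hmα
          rw [List.eraseIdx_append_of_length_le hmα, cs.wordProd_append, ← hαw] at hm2
          rw [mul_assoc] at hm2
          have h8 : cs.wordProd (β₁.eraseIdx (m - α.length))
              = cs.wordProd β₁ * cs.simple b := mul_left_cancel hm2
          have h9 := cs.length_wordProd_le (β₁.eraseIdx (m - α.length))
          have h10 : m - α.length < β₁.length := by omega
          have h11 := List.length_eraseIdx_add_one h10
          rw [h8, ← hveq] at h9
          omega

private lemma minReps_lt_mul {J : Set B} {w v : W} (hw : w ∈ minReps cs J)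
    (hv : v ∈ parabolic cs J) (hv1 : v ≠ 1) : cs.length w < cs.length (w * v) := by
  have h1 := minReps_mul_parabolic_length cs hw (cs.length v) v hv le_rfl
  have h2 : cs.length v ≠ 0 := fun h => hv1 (cs.length_eq_zero_iff.mp h)
  omega

private lemma minReps_simple_mul {J : Set B} {w : W} {k : B} (hw : w ∈ minReps cs J)
    (hdesc : cs.length (cs.simple k * w) + 1 = cs.length w) :
    cs.simple k * w ∈ minReps cs J := by
  intro v hv
  have h1 : cs.length (w * v) = cs.length w + cs.length v :=
    minReps_mul_parabolic_length cs hw (cs.length v) v hv le_rfl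
  have h2 : cs.simple k * w * v = cs.simple k * (w * v) := by rw [mul_assoc]
  rw [h2]
  rcases cs.length_simple_mul (w * v) k with h | h <;> omega

private lemma key_unique {J : Set B} :
    ∀ (n : ℕ) (w x y : W), cs.length w ≤ n → w ∈ minReps cs J →
      bruhatCov cs x w → bruhatCov cs y w → x⁻¹ * y ∈ parabolic cs J → x = y := by
  intro n
  induction' n with n ih
  · intro w x y hn _ hx _ _
    have h1 := hx.2
    omega
  · intro w x y hn hw hx hy hpar
    have hlx : cs.length w = cs.length x + 1 := hx.2
    have hly : cs.length w = cs.length y + 1 := hy.2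
    have hw1 : w ≠ 1 := by
      intro h
      subst h
      rw [cs.length_one] at hlx
      omega
    obtain ⟨k, hk⟩ := cs.exists_leftDescent_of_ne_one hw1
    have hk' : cs.length (cs.simple k * w) < cs.length w := hk
    have hdesc : cs.length (cs.simple k * w) + 1 = cs.length w := by
      rcases cs.length_simple_mul w k with h | h <;> omega
    have hmin : cs.simple k * w ∈ minReps cs J := minReps_simple_mul cs hw hdesc
    by_cases hxe : x = cs.simple k * w <;> by_cases hye : y = cs.simple k * w
    · rw [hxe, hye]
    · exfalso
      have hvne : x⁻¹ * y ≠ 1 := by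
        intro h
        exact hye (by rw [← inv_mul_eq_one.mp h, hxe])
      have hxmin : x ∈ minReps cs J := by rw [hxe]; exact hmin
      have h3 := minReps_lt_mul cs hxmin hpar hvne
      rw [mul_inv_cancel_left] at h3
      omega
    · exfalso
      have hpar' : y⁻¹ * x ∈ parabolic cs J := by
        have h4 := inv_mem hpar
        rwa [mul_inv_rev, inv_inv] at h4
      have hvne : y⁻¹ * x ≠ 1 := by
        intro h
        exact hxe (by rw [← inv_mul_eq_one.mp h, hye])
      have hymin : y ∈ minReps cs J := by rw [hye]; exact hmin
      have h3 := minReps_lt_mul cs hymin hpar' hvne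
      rw [mul_inv_cancel_left] at h3
      omega
    · obtain ⟨hcx, hlx2⟩ := descent_diamond cs k hk' hx hxe
      obtain ⟨hcy, hly2⟩ := descent_diamond cs k hk' hy hye
      have hpar2 : (cs.simple k * x)⁻¹ * (cs.simple k * y) ∈ parabolic cs J := by
        have h5 : (cs.simple k * x)⁻¹ * (cs.simple k * y) = x⁻¹ * y := by group
        rw [h5]
        exact hpar
      have h6 := ih (cs.simple k * w) (cs.simple k * x) (cs.simple k * y)
        (by omega) hmin hcx hcy hpar2
      exact mul_left_cancel h6

end Auxiliary

/-- If w', w ∈ W^J with w' < w in Bruhat order, then at most one element of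
the coset w'W_J is covered by w in Bruhat order. -/
theorem at_most_one_coset_element_covered
    (cs : CoxeterSystem M W) (J : Set B) (w w' : W)
    (hw : w ∈ minReps cs J) (hw' : w' ∈ minReps cs J) (hlt : bruhatLT cs w' w) :
    ∀ v v' : W, v ∈ parabolic cs J → v' ∈ parabolic cs J →
      bruhatCov cs (w' * v) w → bruhatCov cs (w' * v') w → v = v' := by
  intro v v' hv hv' hcov hcov'
  have hpar : (w' * v)⁻¹ * (w' * v') ∈ parabolic cs J := by
    have h : (w' * v)⁻¹ * (w' * v') = v⁻¹ * v' := by group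
    rw [h]
    exact mul_mem (inv_mem hv) hv'
  have h2 := key_unique cs (cs.length w) w (w' * v) (w' * v') le_rfl hw hcov hcov' hpar
  exact mul_left_cancel h2

end TNNFlag
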